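/- arXiv:0806.0260 — 6 statements merged into one kernel-verified Lean document; each statement's English description precedes it below -/
import Mathlib

section
/- Let p be a prime and let x, y be p-adic integers with |x|_p = |y|_p = 1 and |x - y|_p < 1. Then for all natural numbers n, |x^n - y^n|_p ≤ |n|_p · |x - y|_p. -/
lemma padic_dvd_norm_le {p : ℕ} [Fact p.Prime] {a b : ℤ_[p]} (h : a ∣ b) :
    ‖b‖ ≤ ‖a‖ := by
  obtain ⟨c, rfl⟩ := h
  rw [norm_mul]
  calc ‖a‖ * ‖c‖ ≤ ‖a‖ * 1 :=
        mul_le_mul_of_nonneg_left (PadicInt.norm_le_one c) (norm_nonneg a)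
    _ = ‖a‖ := mul_one _

lemma padic_pow_sub_pow_le {p : ℕ} [Fact p.Prime] (a b : ℤ_[p]) (n : ℕ) :
    ‖a ^ n - b ^ n‖ ≤ ‖a - b‖ :=
  padic_dvd_norm_le (sub_dvd_pow_sub_pow a b n)

lemma padic_norm_lt_one_le {p : ℕ} [Fact p.Prime] {z : ℤ_[p]} (h : ‖z‖ < 1) :
    ‖z‖ ≤ ‖(p : ℤ_[p])‖ :=
  padic_dvd_norm_le ((PadicInt.norm_lt_one_iff_dvd z).mp h)

lemma padic_pow_p_sub {p : ℕ} [Fact p.Prime] (a b : ℤ_[p]) (h : ‖a - b‖ < 1) :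
    ‖a ^ p - b ^ p‖ ≤ ‖(p : ℤ_[p])‖ * ‖a - b‖ := by
  have hgs : (∑ i ∈ Finset.range p, a ^ i * b ^ (p - 1 - i)) * (a - b) = a ^ p - b ^ p :=
    geom_sum₂_mul a b p
  set S : ℤ_[p] := ∑ i ∈ Finset.range p, a ^ i * b ^ (p - 1 - i) with hSdef
  have hsplit : S - (p : ℤ_[p]) * b ^ (p - 1)
      = ∑ i ∈ Finset.range p, (a ^ i - b ^ i) * b ^ (p - 1 - i) := by
    have h1 : ∑ i ∈ Finset.range p, (a ^ i - b ^ i) * b ^ (p - 1 - i)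
        = S - ∑ i ∈ Finset.range p, b ^ i * b ^ (p - 1 - i) := by
      rw [hSdef, ← Finset.sum_sub_distrib]
      exact Finset.sum_congr rfl (fun i _ => by ring)
    have h2 : ∑ i ∈ Finset.range p, b ^ i * b ^ (p - 1 - i)
        = (p : ℤ_[p]) * b ^ (p - 1) := by
      rw [Finset.sum_congr rfl (fun i hi => ?_), Finset.sum_const, Finset.card_range,
        nsmul_eq_mul]
      rw [← pow_add]
      congr 1
      have := Finset.mem_range.mp hi
      omega
    rw [h1, h2]
  have hdvd : (a - b) ∣ (S - (p : ℤ_[p]) * b ^ (p - 1)) := by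
    rw [hsplit]
    exact Finset.dvd_sum fun i _ => Dvd.dvd.mul_right (sub_dvd_pow_sub_pow a b i) _
  have h1 : ‖S - (p : ℤ_[p]) * b ^ (p - 1)‖ ≤ ‖(p : ℤ_[p])‖ :=
    le_trans (padic_dvd_norm_le hdvd) (padic_norm_lt_one_le h)
  have h2 : ‖(p : ℤ_[p]) * b ^ (p - 1)‖ ≤ ‖(p : ℤ_[p])‖ :=
    padic_dvd_norm_le (dvd_mul_right _ _)
  have hSle : ‖S‖ ≤ ‖(p : ℤ_[p])‖ := by
    have := PadicInt.nonarchimedean (S - (p : ℤ_[p]) * b ^ (p - 1))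
      ((p : ℤ_[p]) * b ^ (p - 1))
    rw [sub_add_cancel] at this
    exact le_trans this (max_le h1 h2)
  rw [← hgs, norm_mul]
  exact mul_le_mul_of_nonneg_right hSle (norm_nonneg _)

theorem stmt_0 (p : ℕ) [Fact p.Prime] (x y : ℤ_[p])
    (hx : ‖x‖ = 1) (hy : ‖y‖ = 1) (hxy : ‖x - y‖ < 1) :
    ∀ n : ℕ, ‖x ^ n - y ^ n‖ ≤ ‖(n : ℤ_[p])‖ * ‖x - y‖ := by
  intro n
  induction n using Nat.strong_induction_on with
  | _ n ih =>
    rcases Nat.eq_zero_or_pos n with rfl | hn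
    · simp
    by_cases hp : p ∣ n
    · obtain ⟨m, rfl⟩ := hp
      have hm0 : 0 < m := by
        rcases Nat.eq_zero_or_pos m with rfl | h
        · simp at hn
        · exact h
      have hp2 : 2 ≤ p := (Fact.out : p.Prime).two_le
      have hmlt : m < p * m := by
        calc m = 1 * m := (one_mul m).symm
        _ < p * m := (Nat.mul_lt_mul_right hm0).mpr (by omega)
      have hsm : ‖x ^ m - y ^ m‖ < 1 := lt_of_le_of_lt (padic_pow_sub_pow_le x y m) hxy
      have key : ‖x ^ (p * m) - y ^ (p * m)‖ ≤ ‖(p : ℤ_[p])‖ * ‖x ^ m - y ^ m‖ := by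
        rw [mul_comm p m, pow_mul, pow_mul]
        exact padic_pow_p_sub _ _ hsm
      have hnorm : ‖((p * m : ℕ) : ℤ_[p])‖ = ‖(p : ℤ_[p])‖ * ‖(m : ℤ_[p])‖ := by
        push_cast
        rw [norm_mul]
      calc ‖x ^ (p * m) - y ^ (p * m)‖ ≤ ‖(p : ℤ_[p])‖ * ‖x ^ m - y ^ m‖ := key
        _ ≤ ‖(p : ℤ_[p])‖ * (‖(m : ℤ_[p])‖ * ‖x - y‖) :=
            mul_le_mul_of_nonneg_left (ih m hmlt) (norm_nonneg _)
        _ = ‖((p * m : ℕ) : ℤ_[p])‖ * ‖x - y‖ := by rw [hnorm, mul_assoc]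
    · have h1 : ‖(n : ℤ_[p])‖ = 1 := by
        by_contra hne
        have hlt : ‖((n : ℤ) : ℤ_[p])‖ < 1 := by
          push_cast
          exact lt_of_le_of_ne (PadicInt.norm_le_one _) hne
        have hd : (p : ℤ) ∣ (n : ℤ) := (PadicInt.norm_int_lt_one_iff_dvd _).mp hlt
        exact hp (Int.natCast_dvd_natCast.mp hd)
      rw [h1, one_mul]
      exact padic_pow_sub_pow_le x y n
end

section
/- Let p be a prime and n a natural number with gcd(n, p) = 1. Then the map ψ_n(x) = x^n is an isometry on the sphere S_{p^{-l}}(1) = {x ∈ Q_p : |x - 1|_p = p^{-l}} for every l ≥ 1: for all x, y in this sphere, |x^n - y^n|_p = |x - y|_p. -/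
/-!
Write `x ^ n - y ^ n = (x - y) * S` with `S = ∑ x ^ i * y ^ (n - 1 - i)`. Points of the sphere are
principal units (`‖x - 1‖ < 1`), and these are closed under products, so each term of `S` is
`≡ 1` modulo the maximal ideal and `S ≡ n`. As `p ∤ n`, `‖n‖ = 1`, hence `‖S‖ = 1` by the
ultrametric inequality.
-/

namespace IsUltrametricDist

variable {K : Type*} [NormedField K] [IsUltrametricDist K]

lemma norm_add_eq_left_of_norm_lt {a b : K} (h : ‖b‖ < ‖a‖) : ‖a + b‖ = ‖a‖ := by
  rw [norm_add_eq_max_of_norm_ne_norm h.ne', max_eq_left h.le]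

lemma norm_finsetSum_lt_of_forall_lt {ι : Type*} {s : Finset ι} {f : ι → K} {C : ℝ}
    (hC : 0 < C) (h : ∀ i ∈ s, ‖f i‖ < C) : ‖∑ i ∈ s, f i‖ < C := by
  obtain rfl | hs := s.eq_empty_or_nonempty
  · simpa using hC
  obtain ⟨i, hi, hle⟩ := exists_norm_finsetSum_le_of_nonempty hs f
  exact hle.trans_lt (h i hi)

lemma norm_eq_one_of_norm_sub_one_lt_one {x : K} (hx : ‖x - 1‖ < 1) : ‖x‖ = 1 := by
  simpa using norm_add_eq_left_of_norm_lt (a := 1) (b := x - 1) (by simpa using hx)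

lemma norm_mul_sub_one_lt_one {x y : K} (hx : ‖x - 1‖ < 1) (hy : ‖y - 1‖ < 1) :
    ‖x * y - 1‖ < 1 := by
  have hsplit : x * y - 1 = x * (y - 1) + (x - 1) := by ring
  rw [hsplit]
  refine (norm_add_le_max _ _).trans_lt (max_lt ?_ hx)
  rwa [norm_mul, norm_eq_one_of_norm_sub_one_lt_one hx, one_mul]

lemma norm_pow_sub_one_lt_one {x : K} (hx : ‖x - 1‖ < 1) (a : ℕ) : ‖x ^ a - 1‖ < 1 := by
  induction a with
  | zero => simp
  | succ a ih => simpa [pow_succ] using norm_mul_sub_one_lt_one ih hx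

lemma norm_geom_sum₂_eq_one {x y : K} (hx : ‖x - 1‖ < 1) (hy : ‖y - 1‖ < 1) {n : ℕ}
    (hn : ‖(n : K)‖ = 1) : ‖∑ i ∈ Finset.range n, x ^ i * y ^ (n - 1 - i)‖ = 1 := by
  have hdev : ‖∑ i ∈ Finset.range n, (x ^ i * y ^ (n - 1 - i) - 1)‖ < 1 :=
    norm_finsetSum_lt_of_forall_lt one_pos fun i _ ↦
      norm_mul_sub_one_lt_one (norm_pow_sub_one_lt_one hx i) (norm_pow_sub_one_lt_one hy _)
  rw [Finset.sum_sub_distrib, Finset.sum_const, Finset.card_range, nsmul_one] at hdev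
  rw [← add_sub_cancel (n : K) (∑ i ∈ Finset.range n, x ^ i * y ^ (n - 1 - i)),
    norm_add_eq_left_of_norm_lt (hn ▸ hdev), hn]

lemma norm_pow_sub_pow_eq_norm_sub {x y : K} (hx : ‖x - 1‖ < 1) (hy : ‖y - 1‖ < 1) {n : ℕ}
    (hn : ‖(n : K)‖ = 1) : ‖x ^ n - y ^ n‖ = ‖x - y‖ := by
  rw [← geom_sum₂_mul, norm_mul, norm_geom_sum₂_eq_one hx hy hn, one_mul]

end IsUltrametricDist

theorem stmt_3 (p : ℕ) [Fact p.Prime] (n : ℕ) (hn : n.Coprime p)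
    (l : ℕ) (hl : 1 ≤ l) (x y : ℚ_[p])
    (hx : ‖x - 1‖ = (p : ℝ) ^ (-(l : ℤ))) (hy : ‖y - 1‖ = (p : ℝ) ^ (-(l : ℤ))) :
    ‖x ^ n - y ^ n‖ = ‖x - y‖ := by
  have hradius : (p : ℝ) ^ (-(l : ℤ)) < 1 :=
    zpow_lt_one_of_neg₀ (mod_cast (Fact.out : p.Prime).one_lt) (by omega)
  exact IsUltrametricDist.norm_pow_sub_pow_eq_norm_sub (hx ▸ hradius) (hy ▸ hradius)
    (Padic.norm_natCast_eq_one_iff.mpr hn.symm)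
end

section
/- Let p be an odd prime and n a natural number coprime to p. Then the set ⟨n⟩ = {n^N : N ∈ ℕ} is dense in the unit sphere S_1(0) = {x ∈ Z_p : |x|_p = 1} if and only if n is a generator of the group of units (Z/p^2 Z)^*. -/
-- core binomial step
lemma step_pow (p : ℕ) (hp : p.Prime) (hp2 : p ≠ 2) (m : ℕ) (hm : 1 ≤ m) (e : ℤ) :
    ∃ f : ℤ, (1 + (p:ℤ)^m * e)^p = 1 + (p:ℤ)^(m+1) * (e + p * f) := by
  have hp3 : 3 ≤ p := by
    rcases hp.two_le.lt_or_eq with h | h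
    · omega
    · omega
  set x : ℤ := (p:ℤ)^m * e with hx
  have hexp : (x + 1)^p = ∑ k ∈ Finset.range (p+1), x ^ k * (p.choose k : ℤ) := by
    rw [add_pow]
    simp
  have hsplit : ∑ k ∈ Finset.range (p+1), x ^ k * (p.choose k : ℤ)
      = (∑ k ∈ Finset.range 2, x ^ k * (p.choose k : ℤ))
        + ∑ k ∈ Finset.Ico 2 (p+1), x ^ k * (p.choose k : ℤ) := by
    rw [Finset.sum_range_add_sum_Ico _ (by omega)]
  have hdvd : ((p:ℤ)^(m+2)) ∣ ∑ k ∈ Finset.Ico 2 (p+1), x ^ k * (p.choose k : ℤ) := by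
    apply Finset.dvd_sum
    intro k hk
    simp only [Finset.mem_Ico] at hk
    rcases eq_or_lt_of_le (Nat.lt_succ_iff.mp hk.2) with hkp | hkp
    · -- k = p
      have : (p:ℤ)^(m+2) ∣ x ^ k := by
        rw [hx, mul_pow, ← pow_mul]
        exact Dvd.dvd.mul_right (pow_dvd_pow _ (by nlinarith [hk.1, hm])) _
      exact this.mul_right _
    · -- k < p
      have h1 : (p:ℤ)^(m+1) ∣ x ^ k := by
        rw [hx, mul_pow, ← pow_mul]
        exact Dvd.dvd.mul_right (pow_dvd_pow _ (by nlinarith [hk.1, hm])) _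
      have h2 : (p:ℤ) ∣ (p.choose k : ℤ) := by
        exact_mod_cast Int.natCast_dvd_natCast.mpr (hp.dvd_choose_self (by omega) hkp)
      calc (p:ℤ)^(m+2) = (p:ℤ)^(m+1) * p := by ring
        _ ∣ x ^ k * (p.choose k : ℤ) := mul_dvd_mul h1 h2
  obtain ⟨f, hf⟩ := hdvd
  refine ⟨f, ?_⟩
  have h01 : (∑ k ∈ Finset.range 2, x ^ k * (p.choose k : ℤ)) = 1 + x * p := by
    simp [Finset.sum_range_succ]
  have : (1 + x)^p = 1 + x * p + (p:ℤ)^(m+2) * f := by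
    rw [add_comm 1 x, hexp, hsplit, h01, hf]
  rw [this, hx]
  ring

lemma lte_pow (p : ℕ) (hp : p.Prime) (hp2 : p ≠ 2) (c : ℤ) (j : ℕ) :
    ∃ d : ℤ, (1 + (p:ℤ) * c)^(p^j) = 1 + (p:ℤ)^(j+1) * (c + p * d) := by
  induction j with
  | zero => exact ⟨0, by ring⟩
  | succ j ih =>
    obtain ⟨d, hd⟩ := ih
    obtain ⟨f, hf⟩ := step_pow p hp hp2 (j+1) (by omega) (c + p * d)
    refine ⟨d + f, ?_⟩
    rw [pow_succ, pow_mul, hd, hf]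
    ring



lemma genA (p n : ℕ) [hpf : Fact p.Prime] (hp2 : p ≠ 2) (hn : n.Coprime p)
    (H2 : ∀ y : ZMod (p^2), IsUnit y → ∃ N : ℕ, (n : ZMod (p^2))^N = y) (k : ℕ) :
    ∀ y : ZMod (p^(k+2)), IsUnit y → ∃ N : ℕ, (n : ZMod (p^(k+2)))^N = y := by
  have hp : p.Prime := hpf.out
  have hp0 : p ≠ 0 := hp.ne_zero
  haveI : NeZero (p^2) := ⟨pow_ne_zero _ hp0⟩
  haveI : NeZero (p^(k+2)) := ⟨pow_ne_zero _ hp0⟩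
  set K := k + 2 with hK
  -- units
  have hn2 : n.Coprime (p^2) := hn.pow_right _
  have hnK : n.Coprime (p^K) := hn.pow_right _
  set u2 : (ZMod (p^2))ˣ := ZMod.unitOfCoprime n hn2 with hu2
  set uK : (ZMod (p^K))ˣ := ZMod.unitOfCoprime n hnK with huK
  -- order of u2 = p*(p-1)
  have hord2 : orderOf u2 = p * (p - 1) := by
    have hmem : ∀ v : (ZMod (p^2))ˣ, v ∈ Subgroup.zpowers u2 := by
      intro v
      obtain ⟨N, hN⟩ := H2 (v : ZMod (p^2)) v.isUnit
      refine ⟨(N : ℤ), ?_⟩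
      show u2 ^ (N : ℤ) = v
      rw [zpow_natCast]
      ext
      simpa [hu2, ZMod.coe_unitOfCoprime] using hN
    have := orderOf_eq_card_of_forall_mem_zpowers hmem
    rw [this, Nat.card_eq_fintype_card, ZMod.card_units_eq_totient,
      Nat.totient_prime_pow hp (by omega), pow_one]
  -- n^(p-1) = 1 + p c with p ∤ c
  have hfermat : ((p:ℤ)) ∣ (n:ℤ)^(p-1) - 1 := by
    have h1 : (n : ZMod p) ≠ 0 := by
      rw [Ne, ZMod.natCast_eq_zero_iff]
      exact (Nat.Prime.coprime_iff_not_dvd hp).mp hn.symm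
    have := ZMod.pow_card_sub_one_eq_one h1
    have h2 : ((((n:ℤ)^(p-1) - 1 : ℤ)) : ZMod p) = 0 := by
      push_cast
      rw [this]; ring
    exact_mod_cast (ZMod.intCast_zmod_eq_zero_iff_dvd _ _).mp h2
  obtain ⟨c, hc⟩ := hfermat
  have hc' : (n:ℤ)^(p-1) = 1 + p * c := by linarith
  have hpc : ¬ ((p:ℤ) ∣ c) := by
    intro hdvd
    obtain ⟨c', rfl⟩ := hdvd
    have h1 : ((n : ZMod (p^2)))^(p-1) = 1 := by
      have : (((n:ℤ)^(p-1) - 1 : ℤ) : ZMod (p^2)) = 0 := by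
        rw [ZMod.intCast_zmod_eq_zero_iff_dvd]
        refine ⟨c', ?_⟩
        push_cast [hc']
        ring
      push_cast at this
      linear_combination this
    have h2 : u2 ^ (p-1) = 1 := by
      ext; push_cast [hu2, ZMod.coe_unitOfCoprime]; exact h1
    have h3 := orderOf_dvd_of_pow_eq_one h2
    rw [hord2] at h3
    have h4 := Nat.le_of_dvd (by have := hp.two_le; omega) h3
    have h5 : 2 * (p-1) ≤ p * (p-1) := Nat.mul_le_mul_right _ hp.two_le
    have := hp.two_le
    omega
  -- key: n^((p-1)*p^(K-2)) ≠ 1 in ZMod (p^K)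
  have hkey : ((n : ZMod (p^K)))^((p-1) * p^k) ≠ 1 := by
    obtain ⟨d, hd⟩ := lte_pow p hp hp2 c k
    intro habs
    have h0 : (((n:ℤ)^((p-1) * p^k) - 1 : ℤ) : ZMod (p^K)) = 0 := by
      push_cast
      rw [habs]; ring
    rw [ZMod.intCast_zmod_eq_zero_iff_dvd] at h0
    have h1 : (n:ℤ)^((p-1) * p^k) = 1 + (p:ℤ)^(k+1) * (c + p * d) := by
      rw [mul_comm (p-1), pow_mul'] at *
      rw [hc', hd]
    rw [h1] at h0
    have h2 : ((p:ℤ))^(k+2) ∣ (p:ℤ)^(k+1) * (c + p * d) := by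
      have : ((p:ℤ))^K = ((p:ℤ))^(k+2) := by push_cast [hK]; ring_nf
      rw [← this]
      simpa using h0
    have h3 : (p:ℤ) ∣ (c + p * d) := by
      have hppow : ((p:ℤ))^(k+1) ≠ 0 := pow_ne_zero _ (by exact_mod_cast hp0)
      have : ((p:ℤ))^(k+2) = ((p:ℤ))^(k+1) * p := by ring
      rw [this] at h2
      exact (mul_dvd_mul_iff_left hppow).mp h2
    apply hpc
    have : (c : ℤ) = (c + p*d) - p * d := by ring
    rw [this]
    exact dvd_sub h3 ⟨d, rfl⟩
  -- order of uK
  have hdvd2K : (p^2 : ℕ) ∣ p^K := pow_dvd_pow _ (by omega)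
  have hmapu : ZMod.unitsMap hdvd2K uK = u2 := by
    ext
    simp [ZMod.unitsMap, huK, hu2, ZMod.coe_unitOfCoprime]
  have hdvd_ord : p * (p-1) ∣ orderOf uK := by
    rw [← hord2, ← hmapu]
    exact orderOf_map_dvd _ _
  have hcard : Fintype.card (ZMod (p^K))ˣ = p^(K-1) * (p-1) := by
    rw [ZMod.card_units_eq_totient, Nat.totient_prime_pow hp (by omega)]
  have hordK : orderOf uK = p^(K-1) * (p - 1) := by
    have hdvdcard : orderOf uK ∣ p^(K-1) * (p-1) := hcard ▸ orderOf_dvd_card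
    obtain ⟨t, ht⟩ := hdvd_ord
    have heq : p^(K-1) * (p-1) = (p * (p-1)) * p^k := by
      have : K - 1 = k + 1 := by omega
      rw [this]; ring
    have htdvd : t ∣ p^k := by
      have h5 : p * (p-1) * t ∣ (p * (p-1)) * p^k := by
        rw [← ht, ← heq]; exact hdvdcard
      have hne : p * (p-1) ≠ 0 :=
        (Nat.mul_pos (by omega) (by have := hp.two_le; omega)).ne'
      exact (mul_dvd_mul_iff_left hne).mp h5
    obtain ⟨b, hb, rfl⟩ := (Nat.dvd_prime_pow hp).mp htdvd
    rcases eq_or_lt_of_le hb with hbk | hbk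
    · rw [ht, hbk, heq]
    · exfalso
      apply hkey
      have h6 : uK ^ ((p-1) * p^k) = 1 := by
        apply orderOf_dvd_iff_pow_eq_one.mp
        rw [ht]
        have hpk : p ^ k = p^(b+1) * p^(k-1-b) := by
          rw [← pow_add]; congr 1; omega
        rw [hpk]
        exact ⟨p^(k-1-b), by ring⟩
      have := congrArg (Units.val) h6
      simpa [huK, ZMod.coe_unitOfCoprime] using this
  -- conclude: uK generates
  have htop : ∀ v : (ZMod (p^K))ˣ, v ∈ Subgroup.zpowers uK := by
    have hcard' : Fintype.card (Subgroup.zpowers uK) = Fintype.card (ZMod (p^K))ˣ := by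
      rw [Fintype.card_zpowers, hordK, hcard]
    have := Subgroup.eq_top_of_card_eq (Subgroup.zpowers uK)
      (by rw [Nat.card_eq_fintype_card, Nat.card_eq_fintype_card, hcard'])
    intro v; rw [this]; trivial
  intro y hy
  obtain ⟨v, hv⟩ := hy
  obtain ⟨N, hN⟩ := mem_powers_iff_mem_zpowers.mpr (htop v)
  refine ⟨N, ?_⟩
  have := congrArg (Units.val) hN
  rw [← hv, ← this]
  push_cast [huK, ZMod.coe_unitOfCoprime]
  rfl


theorem stmt_8 (p : ℕ) [Fact p.Prime] (hp : p ≠ 2) (n : ℕ) (hn : n.Coprime p) :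
    (∀ x : ℤ_[p], ‖x‖ = 1 → ∀ ε : ℝ, 0 < ε → ∃ N : ℕ, ‖(n : ℤ_[p]) ^ N - x‖ < ε)
      ↔ (∀ y : ZMod (p ^ 2), IsUnit y → ∃ N : ℕ, (n : ZMod (p ^ 2)) ^ N = y) := by
  have hpp : p.Prime := Fact.out
  have hp0 : p ≠ 0 := hpp.ne_zero
  have hp1 : (1:ℝ) < p := by exact_mod_cast hpp.one_lt
  haveI : NeZero (p^2) := ⟨pow_ne_zero _ hp0⟩
  constructor
  · -- density → generation mod p^2
    intro H y hy
    set m := y.val with hm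
    have hym : ((m : ℕ) : ZMod (p^2)) = y := ZMod.natCast_zmod_val y
    have hcop : m.Coprime (p^2) := by
      rw [← ZMod.isUnit_iff_coprime, hym]; exact hy
    have hpm : ¬ (p ∣ m) := by
      intro hdvd
      have : p ∣ Nat.gcd m (p^2) := Nat.dvd_gcd hdvd (dvd_pow_self p (by omega))
      rw [hcop] at this
      have := Nat.le_of_dvd one_pos this
      have := hpp.two_le
      omega
    set x : ℤ_[p] := ((m : ℕ) : ℤ_[p]) with hxdef
    have hx1 : ‖x‖ = 1 := by
      rcases lt_or_eq_of_le (PadicInt.norm_le_one x) with h | h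
      · exfalso
        have : ((m:ℤ) : ℤ_[p]) = x := by push_cast [hxdef]; rfl
        rw [← this, PadicInt.norm_int_lt_one_iff_dvd] at h
        exact hpm (by exact_mod_cast h)
      · exact h
    obtain ⟨N, hN⟩ := H x hx1 ((p:ℝ) ^ (-1 : ℤ)) (by positivity)
    rw [PadicInt.norm_lt_pow_iff_norm_le_pow_sub_one] at hN
    have hmem : ((n : ℤ_[p]) ^ N - x) ∈ (Ideal.span {(p : ℤ_[p]) ^ 2} : Ideal ℤ_[p]) := by
      rw [← PadicInt.norm_le_pow_iff_mem_span_pow]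
      have : (-(2:ℕ) : ℤ) = -1 - 1 := by norm_num
      rw [this]
      exact hN
    rw [← PadicInt.ker_toZModPow, RingHom.mem_ker, map_sub, map_pow, map_natCast] at hmem
    have : (PadicInt.toZModPow 2) x = y := by
      rw [hxdef, map_natCast, hym]
    rw [this, sub_eq_zero] at hmem
    exact ⟨N, hmem⟩
  · -- generation mod p^2 → density
    intro H2 x hx ε hε
    have hinv : (p:ℝ)⁻¹ < 1 := inv_lt_one_of_one_lt₀ hp1
    obtain ⟨k, hk⟩ := exists_pow_lt_of_lt_one hε hinv
    haveI : NeZero (p^(k+2)) := ⟨pow_ne_zero _ hp0⟩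
    set y := PadicInt.toZModPow (k+2) x with hy
    have hyu : IsUnit y := (PadicInt.isUnit_iff.mpr hx).map (PadicInt.toZModPow (k+2))
    obtain ⟨N, hN⟩ := genA p n hp hn H2 k y hyu
    refine ⟨N, ?_⟩
    have hmem : ((n : ℤ_[p]) ^ N - x) ∈ (Ideal.span {(p : ℤ_[p]) ^ (k+2)} : Ideal ℤ_[p]) := by
      rw [← PadicInt.ker_toZModPow, RingHom.mem_ker, map_sub, map_pow, map_natCast, hN, ← hy,
        sub_self]
    rw [← PadicInt.norm_le_pow_iff_mem_span_pow] at hmem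
    calc ‖(n : ℤ_[p]) ^ N - x‖ ≤ (p:ℝ) ^ (-(k+2 : ℕ) : ℤ) := hmem
      _ = ((p:ℝ)⁻¹) ^ (k+2) := by rw [zpow_neg, zpow_natCast, inv_pow]
      _ ≤ ((p:ℝ)⁻¹) ^ k := by
          apply pow_le_pow_of_le_one (by positivity) (le_of_lt hinv) (by omega)
      _ < ε := hk
end

section
/- Let p be an odd prime, l ≥ 1, and n a natural number. The monomial dynamical system ψ_n(x) = x^n on the sphere S_{p^{-l}}(1) = {x ∈ Q_p : |x - 1|_p = p^{-l}} is minimal (every forward orbit {x^{n^N} : N ∈ ℕ} is dense in the sphere) if and only if n is a generator of the multiplicative group (Z/p^2 Z)^*. -/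
/-! For `x` with `‖x - 1‖ = p ^ (-l)` the reduction of `x` modulo `p ^ (j + l)` is `1 + p ^ l * a`
with `p ∤ a`, so it has order exactly `p ^ j`. In the cyclic group
`(ZMod (p ^ (j + l)))ˣ` any two such elements generate the same subgroup, so `y ≡ x ^ e` with
`p ∤ e`, and `x ^ (n ^ N) ≡ y` amounts to `n ^ N ≡ e [MOD p ^ j]`. Density of the orbits is thus
equivalent to `n` generating `(ZMod (p ^ j))ˣ` for every `j`, and a generator modulo `p ^ 2` is one
modulo every `p ^ j`, because `n ^ (p - 1) = 1 + p * c` with `p ∤ c`. -/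

open Subgroup
open scoped Nat

section Monoid

variable {M : Type*} [Monoid M] {a : M}

theorem orderOf_eq_card_units_of_forall_exists_pow_eq [Nontrivial Mˣ]
    (h : ∀ y : M, IsUnit y → ∃ N : ℕ, a ^ N = y) : orderOf a = Nat.card Mˣ := by
  obtain ⟨u, hu⟩ := exists_ne (1 : Mˣ)
  obtain ⟨N, hN⟩ := h u u.isUnit
  have hN0 : N ≠ 0 := by
    rintro rfl
    exact hu (Units.ext (by simpa using hN.symm))
  have ha : IsUnit a := (isUnit_pow_iff hN0).mp (hN ▸ u.isUnit)
  rw [← ha.unit_spec, orderOf_units]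
  refine orderOf_eq_card_of_forall_mem_zpowers fun v => ?_
  obtain ⟨N, hN⟩ := h v v.isUnit
  exact ⟨N, Units.ext (by simpa using hN)⟩

theorem exists_pow_eq_of_orderOf_eq_card_units [Finite Mˣ] (ha : orderOf a = Nat.card Mˣ) {y : M}
    (hy : IsUnit y) : ∃ N : ℕ, a ^ N = y := by
  have hfin : IsOfFinOrder a := orderOf_pos_iff.mp (ha ▸ Nat.card_pos)
  set u := hfin.isUnit.unit
  have hu : zpowers u = ⊤ := by
    rw [← Subgroup.card_eq_iff_eq_top, Nat.card_zpowers, ← ha, ← orderOf_units,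
      IsUnit.unit_spec]
  obtain ⟨N, hN⟩ := (mem_powers_iff_mem_zpowers (y := hy.unit)).mpr (hu ▸ mem_top _)
  exact ⟨N, by simpa [u] using congrArg Units.val hN⟩

end Monoid

theorem IsCyclic.mem_zpowers_of_orderOf_dvd {G : Type*} [CommGroup G] [Finite G] [IsCyclic G]
    {x y : G} (h : orderOf y ∣ orderOf x) : y ∈ zpowers x := by
  set K := (powMonoidHom (orderOf x) : G →* G).ker
  have hxK : zpowers x = K := by
    refine Subgroup.eq_of_le_of_card_ge (zpowers_le.mpr (pow_orderOf_eq_one x)) ?_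
    rw [IsCyclic.card_powMonoidHom_ker, Nat.card_zpowers,
      Nat.gcd_eq_right (orderOf_dvd_natCard x)]
  rw [hxK]
  exact orderOf_dvd_iff_pow_eq_one.mp h

theorem exists_pow_pow_eq_of_mem_zpowers {G : Type*} [Group G] {x y : G} (hx : IsOfFinOrder x)
    (hy : y ∈ zpowers x) (hxy : orderOf y = orderOf x) {n : ℕ}
    (hn : ∀ e : ZMod (orderOf x), IsUnit e → ∃ N : ℕ, (n : ZMod (orderOf x)) ^ N = e) :
    ∃ N : ℕ, x ^ (n ^ N) = y := by
  obtain ⟨e, rfl⟩ := hx.mem_powers_iff_mem_zpowers.mpr hy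
  have hcop : (orderOf x).Coprime e := by
    rw [hx.orderOf_pow] at hxy
    exact (Nat.div_eq_self.mp hxy).resolve_left hx.orderOf_pos.ne'
  obtain ⟨N, hN⟩ := hn e ((ZMod.isUnit_iff_coprime e _).mpr hcop.symm)
  refine ⟨N, pow_eq_pow_iff_modEq.mpr ?_⟩
  rw [← ZMod.natCast_eq_natCast_iff, Nat.cast_pow, hN]

namespace ZMod

variable {p : ℕ}

theorem not_dvd_val_of_isUnit (hp : p.Prime) {k : ℕ} (hk : k ≠ 0) {v : ZMod (p ^ k)}
    (hv : IsUnit v) : ¬ p ∣ v.val := fun h =>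
  hp.ne_one <| ((val_coe_unit_coprime hv.unit).coprime_dvd_right
    (dvd_pow_self p hk)).symm.eq_one_of_dvd h

theorem orderOf_natCast_pow_sub_one (hp : p.Prime) (hp2 : p ≠ 2) {n : ℕ} (hpn : ¬ p ∣ n)
    (hn : (n : ZMod (p ^ 2)) ^ (p - 1) ≠ 1) (j : ℕ) :
    orderOf ((n : ZMod (p ^ (j + 1))) ^ (p - 1)) = p ^ j := by
  have hfermat : (n : ℤ) ^ (p - 1) ≡ 1 [ZMOD p] := Int.ModEq.pow_card_sub_one_eq_one hp
    (Nat.isCoprime_iff_coprime.mpr ((hp.coprime_iff_not_dvd.mpr hpn).symm))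
  obtain ⟨c, hc⟩ := hfermat.symm.dvd
  have hcast : ∀ k, (n : ZMod (p ^ k)) ^ (p - 1) = 1 + p * c := fun k => by
    have := congrArg (Int.cast : ℤ → ZMod (p ^ k)) (eq_add_of_sub_eq hc)
    push_cast at this
    rw [this, add_comm]
  have hpc : ¬ (p : ℤ) ∣ c := by
    rintro ⟨d, rfl⟩
    apply hn
    rw [hcast, Int.cast_mul, Int.cast_natCast, ← mul_assoc, ← sq, ← Nat.cast_pow,
      ZMod.natCast_self, zero_mul, add_zero]
  rw [hcast]
  exact orderOf_one_add_mul_prime hp hp2 c hpc j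

theorem orderOf_natCast_prime_pow_eq_totient (hp : p.Prime) (hp2 : p ≠ 2) {n : ℕ}
    (hn : orderOf (n : ZMod (p ^ 2)) = φ (p ^ 2)) {j : ℕ} (hj : 2 ≤ j) :
    orderOf (n : ZMod (p ^ j)) = φ (p ^ j) := by
  obtain ⟨i, rfl⟩ : ∃ i, j = i + 1 := ⟨j - 1, by omega⟩
  have hφ : ∀ k, φ (p ^ (k + 1)) = p ^ k * (p - 1) := Nat.totient_prime_pow_succ hp
  have hpn : ¬ p ∣ n := by
    have hunit := (orderOf_pos_iff.mp (hn ▸ Nat.totient_pos.mpr (pow_pos hp.pos 2))).isUnit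
    rw [ZMod.isUnit_iff_coprime] at hunit
    exact (hp.coprime_iff_not_dvd.mp (hunit.coprime_dvd_right (dvd_pow_self p two_ne_zero)).symm)
  have hn1 : (n : ZMod (p ^ 2)) ^ (p - 1) ≠ 1 := by
    intro h
    have := Nat.le_of_dvd (by have := hp.two_le; omega) (hn ▸ orderOf_dvd_of_pow_eq_one h)
    rw [hφ 1, pow_one] at this
    have := Nat.mul_lt_mul_of_pos_right hp.one_lt (show 0 < p - 1 by have := hp.two_le; omega)
    omega
  have hpow : p ^ i ∣ orderOf (n : ZMod (p ^ (i + 1))) :=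
    orderOf_natCast_pow_sub_one hp hp2 hpn hn1 i ▸ orderOf_pow_dvd _
  have hsub : p - 1 ∣ orderOf (n : ZMod (p ^ (i + 1))) := by
    have := orderOf_map_dvd (ZMod.castHom (pow_dvd_pow p hj) (ZMod (p ^ 2))).toMonoidHom
      (n : ZMod (p ^ (i + 1)))
    rw [RingHom.toMonoidHom_eq_coe, MonoidHom.coe_coe, map_natCast, hn, hφ 1] at this
    exact dvd_trans (dvd_mul_left _ _) this
  have htot : orderOf (n : ZMod (p ^ (i + 1))) ∣ φ (p ^ (i + 1)) := by
    refine orderOf_dvd_of_pow_eq_one ?_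
    have := (Nat.ModEq.pow_totient ((Nat.Coprime.pow_right _
      ((hp.coprime_iff_not_dvd.mpr hpn).symm))) : n ^ φ (p ^ (i + 1)) ≡ 1 [MOD p ^ (i + 1)])
    exact_mod_cast (ZMod.natCast_eq_natCast_iff _ _ _).mpr this
  have hcop : (p ^ i).Coprime (p - 1) := by
    apply Nat.Coprime.pow_left
    rw [Nat.coprime_self_sub_right hp.pos]
    simp
  rw [hφ] at htot ⊢
  exact Nat.dvd_antisymm htot (hcop.mul_dvd_of_dvd_of_dvd hpow hsub)

end ZMod

namespace PadicInt

variable {p : ℕ} [Fact p.Prime]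

theorem toZModPow_eq_iff_norm_sub_le {k : ℕ} {a b : ℤ_[p]} :
    toZModPow k a = toZModPow k b ↔ ‖a - b‖ ≤ p ^ (-k : ℤ) := by
  rw [← sub_eq_zero, ← map_sub, ← RingHom.mem_ker, ker_toZModPow, norm_le_pow_iff_mem_span_pow]

theorem norm_pow_sub_one_of_not_dvd {z : ℤ_[p]} (hz : ‖z - 1‖ < 1) {e : ℕ} (he : ¬ p ∣ e) :
    ‖z ^ e - 1‖ = ‖z - 1‖ := by
  have hpz : (p : ℤ_[p]) ∣ z - 1 := (norm_lt_one_iff_dvd _).mp hz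
  have hpz' : ¬ (p : ℤ_[p]) ∣ z := fun h =>
    prime_p.not_dvd_one (by simpa using dvd_sub h hpz)
  have hpe : ¬ (p : ℤ_[p]) ∣ e := by
    rw [← norm_lt_one_iff_dvd, norm_natCast_eq_one_iff.mpr
      ((Fact.out : p.Prime).coprime_iff_not_dvd.mpr he)]
    exact lt_irrefl 1
  have hsum : ‖∑ i ∈ Finset.range e, z ^ i‖ = 1 := by
    have := not_dvd_geom_sum₂ prime_p (by simpa using hpz) hpz' hpe (y := 1)
    simp only [one_pow, mul_one] at this
    exact le_antisymm (norm_le_one _) (not_lt.mp (mt (norm_lt_one_iff_dvd _).mp this))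
  rw [← mul_geom_sum, norm_mul, hsum, mul_one]

theorem orderOf_toZModPow_of_norm_sub_one (hp2 : p ≠ 2) {l : ℕ} (hl : l ≠ 0) {z : ℤ_[p]}
    (hz : ‖z - 1‖ = p ^ (-l : ℤ)) (j : ℕ) : orderOf (toZModPow (j + l) z) = p ^ j := by
  have hp : p.Prime := Fact.out
  have hz0 : z - 1 ≠ 0 := by
    rintro h
    rw [h, norm_zero] at hz
    exact (zpow_pos (by exact_mod_cast hp.pos) _).ne' hz.symm
  have hval : (z - 1).valuation = l := by
    rw [norm_eq_zpow_neg_valuation hz0] at hz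
    have := zpow_right_injective₀ (by exact_mod_cast hp.pos) (by exact_mod_cast hp.ne_one) hz
    omega
  have hzu : z = 1 + p ^ l * (unitCoeff hz0 : ℤ_[p]) := by
    have := unitCoeff_spec hz0
    rw [hval] at this
    linear_combination this
  set v := toZModPow (j + l) (unitCoeff hz0 : ℤ_[p])
  have hv : IsUnit v := (unitCoeff hz0).isUnit.map _
  have hpv : ¬ (p : ℤ) ∣ (v.val : ℤ) := by
    rw [Int.natCast_dvd_natCast]
    exact ZMod.not_dvd_val_of_isUnit hp (by omega) hv
  have hcast : ((v.val : ℤ) : ZMod (p ^ (j + l))) = v := by simp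
  rw [hzu, map_add, map_one, map_mul, map_pow, map_natCast]
  change orderOf (1 + (p : ZMod (p ^ (j + l))) ^ l * v) = p ^ j
  rw [← hcast]
  refine ZMod.orderOf_one_add_mul_prime_pow hp l hl ?_ _ hpv j
  have : 3 * l ≤ p * l := Nat.mul_le_mul_right l (by have := hp.two_le; omega)
  omega

theorem exists_toZModPow_pow_pow_eq (hp2 : p ≠ 2) {l : ℕ} (hl : l ≠ 0) {z w : ℤ_[p]}
    (hz : ‖z - 1‖ = p ^ (-l : ℤ)) (hw : ‖w - 1‖ = p ^ (-l : ℤ)) {n j : ℕ}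
    (hn : orderOf (n : ZMod (p ^ j)) = φ (p ^ j)) :
    ∃ N : ℕ, toZModPow (j + l) (z ^ (n ^ N)) = toZModPow (j + l) w := by
  have hp : p.Prime := Fact.out
  have := ZMod.isCyclic_units_of_prime_pow p hp hp2 (j + l)
  have hzo := orderOf_toZModPow_of_norm_sub_one hp2 hl hz j
  have hwo := orderOf_toZModPow_of_norm_sub_one hp2 hl hw j
  set U := (orderOf_pos_iff.mp (hzo ▸ pow_pos hp.pos j)).isUnit.unit
  set V := (orderOf_pos_iff.mp (hwo ▸ pow_pos hp.pos j)).isUnit.unit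
  have hU : orderOf U = p ^ j := by rw [← orderOf_units, IsUnit.unit_spec, hzo]
  have hV : orderOf V = p ^ j := by rw [← orderOf_units, IsUnit.unit_spec, hwo]
  have hgen : ∀ e : ZMod (orderOf U), IsUnit e → ∃ N : ℕ, (n : ZMod (orderOf U)) ^ N = e := by
    rw [hU]
    refine fun e he => exists_pow_eq_of_orderOf_eq_card_units ?_ he
    rw [hn, Nat.card_eq_fintype_card, ZMod.card_units_eq_totient]
  obtain ⟨N, hN⟩ := exists_pow_pow_eq_of_mem_zpowers (isOfFinOrder_of_finite U)
    (IsCyclic.mem_zpowers_of_orderOf_dvd (hU ▸ hV ▸ dvd_rfl)) (hV.trans hU.symm) hgen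
  refine ⟨N, ?_⟩
  simpa [U, V] using congrArg Units.val hN

end PadicInt

namespace Padic

variable {p : ℕ} [Fact p.Prime]

theorem exists_coe_eq_of_norm_sub_one_le {x : ℚ_[p]} (hx : ‖x - 1‖ ≤ 1) :
    ∃ z : ℤ_[p], (z : ℚ_[p]) = x := by
  refine ⟨⟨x, ?_⟩, rfl⟩
  calc ‖x‖ = ‖(x - 1) + 1‖ := by rw [sub_add_cancel]
    _ ≤ max ‖x - 1‖ ‖(1 : ℚ_[p])‖ := nonarchimedean _ _
    _ ≤ 1 := by simpa using hx

theorem exists_norm_pow_pow_sub_lt (hp2 : p ≠ 2) {l : ℕ} (hl : l ≠ 0) {n : ℕ}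
    (hn : orderOf (n : ZMod (p ^ 2)) = φ (p ^ 2)) {x y : ℚ_[p]}
    (hx : ‖x - 1‖ = p ^ (-l : ℤ)) (hy : ‖y - 1‖ = p ^ (-l : ℤ)) {ε : ℝ} (hε : 0 < ε) :
    ∃ N : ℕ, ‖x ^ (n ^ N) - y‖ < ε := by
  have hp : p.Prime := Fact.out
  have hp1 : (1 : ℝ) < p := by exact_mod_cast hp.one_lt
  have hle : (p : ℝ) ^ (-l : ℤ) ≤ 1 := zpow_le_one_of_nonpos₀ hp1.le (by omega)
  obtain ⟨z, rfl⟩ := exists_coe_eq_of_norm_sub_one_le (hx.trans_le hle)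
  obtain ⟨w, rfl⟩ := exists_coe_eq_of_norm_sub_one_le (hy.trans_le hle)
  norm_cast at hx hy ⊢
  obtain ⟨k, hk⟩ := exists_pow_lt_of_lt_one hε (inv_lt_one_of_one_lt₀ hp1)
  obtain ⟨N, hN⟩ := PadicInt.exists_toZModPow_pow_pow_eq hp2 hl hx hy
    (ZMod.orderOf_natCast_prime_pow_eq_totient hp hp2 hn (le_add_self : 2 ≤ k + 2))
  refine ⟨N, (PadicInt.toZModPow_eq_iff_norm_sub_le.mp hN).trans_lt (lt_of_le_of_lt ?_ hk)⟩
  rw [inv_pow, ← zpow_natCast, ← zpow_neg]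
  exact zpow_le_zpow_right₀ hp1.le (by omega)

theorem exists_pow_eq_of_forall_exists_norm_pow_pow_sub_lt (hp2 : p ≠ 2) {l : ℕ} (hl : l ≠ 0)
    {n : ℕ} (H : ∀ x y : ℚ_[p], ‖x - 1‖ = p ^ (-l : ℤ) → ‖y - 1‖ = p ^ (-l : ℤ) →
      ∀ ε : ℝ, 0 < ε → ∃ N : ℕ, ‖x ^ (n ^ N) - y‖ < ε)
    {y : ZMod (p ^ 2)} (hy : IsUnit y) : ∃ N : ℕ, (n : ZMod (p ^ 2)) ^ N = y := by
  have hp : p.Prime := Fact.out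
  set z : ℤ_[p] := 1 + p ^ l
  have hz : ‖z - 1‖ = p ^ (-l : ℤ) := by simp [z]
  have hz1 : ‖z - 1‖ < 1 := hz ▸ zpow_lt_one_of_neg₀ (by exact_mod_cast hp.one_lt) (by omega)
  have hze : ‖z ^ y.val - 1‖ = p ^ (-l : ℤ) := by
    rw [PadicInt.norm_pow_sub_one_of_not_dvd hz1 (ZMod.not_dvd_val_of_isUnit hp two_ne_zero hy), hz]
  obtain ⟨N, hN⟩ := H z (z ^ y.val) (by exact_mod_cast hz) (by exact_mod_cast hze)
    (p ^ (-(2 + l : ℕ) : ℤ)) (zpow_pos (by exact_mod_cast hp.pos) _)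
  have heq : PadicInt.toZModPow (2 + l) z ^ (n ^ N) = PadicInt.toZModPow (2 + l) z ^ y.val := by
    rw [← map_pow, ← map_pow, PadicInt.toZModPow_eq_iff_norm_sub_le]
    exact_mod_cast hN.le
  have hzo := PadicInt.orderOf_toZModPow_of_norm_sub_one hp2 hl hz 2
  rw [(orderOf_pos_iff.mp (hzo ▸ pow_pos hp.pos 2)).pow_eq_pow_iff_modEq, hzo,
    ← ZMod.natCast_eq_natCast_iff] at heq
  exact ⟨N, by rw [← Nat.cast_pow, heq, ZMod.natCast_zmod_val]⟩

end Padic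

theorem stmt_13 (p : ℕ) [Fact p.Prime] (hp : p ≠ 2) (l : ℕ) (hl : 1 ≤ l) (n : ℕ) :
    (∀ x y : ℚ_[p], ‖x - 1‖ = (p : ℝ) ^ (-(l : ℤ)) → ‖y - 1‖ = (p : ℝ) ^ (-(l : ℤ)) →
        ∀ ε : ℝ, 0 < ε → ∃ N : ℕ, ‖x ^ (n ^ N) - y‖ < ε)
      ↔ (∀ y : ZMod (p ^ 2), IsUnit y → ∃ N : ℕ, (n : ZMod (p ^ 2)) ^ N = y) := by
  have hprime : p.Prime := Fact.out
  constructor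
  · intro H y hy
    exact Padic.exists_pow_eq_of_forall_exists_norm_pow_pow_sub_lt hp (by omega) H hy
  · intro H x y hx hy ε hε
    have : Fact (2 < p ^ 2) := ⟨by nlinarith [hprime.two_le]⟩
    have : Nontrivial (ZMod (p ^ 2))ˣ :=
      nontrivial_of_ne (-1) 1 fun h => ZMod.neg_one_ne_one (congrArg Units.val h)
    have hn : orderOf (n : ZMod (p ^ 2)) = φ (p ^ 2) := by
      rw [← ZMod.card_units_eq_totient, ← Nat.card_eq_fintype_card]
      exact orderOf_eq_card_units_of_forall_exists_pow_eq H
    exact Padic.exists_norm_pow_pow_sub_lt hp (by omega) hn hx hy hε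
end

section
/- Let p be an odd prime, l ≥ 1, n coprime to p, and let ψ be a self-map of S_{p^{-l}}(1) that is an isometry mapping each ball onto a ball of the same radius. If ψ is minimal on S_{p^{-l}}(1), then the normalized restriction of the Haar measure of Z_p to S_{p^{-l}}(1) is the unique ψ-invariant Borel probability measure on S_{p^{-l}}(1); in particular, for ψ = ψ_n with ψ_n(x) = x^n minimal, ψ_n is uniquely ergodic. -/
/-!
An invariant measure `μ` of an isometry `ψ` satisfies `μ (closedBall (ψ x) r) = μ (closedBall x r)`,
and in an ultrametric space every point of a ball is a centre of it; since every `ψ`-orbit is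
dense, `μ` gives the same mass to all balls of a given radius. For `r = p ^ (-(l + k))` the sphere
is the disjoint union of `(p - 1) p ^ (k - 1) = φ (p ^ k)` such balls, centred at `1 + p ^ l u` with
`u` running over the units mod `p ^ k`, so each of them has mass `1 / ((p - 1) p ^ (k - 1))`. These
balls form a π-system generating the Borel σ-algebra, which gives uniqueness. The normalized
restriction of the Haar measure of `ℤ_[p]` also gives equal mass to balls of equal radius, and it
is `ψ`-invariant because `ψ`, a minimal map of a compact space, is onto: the preimage of a ball is
then a ball of the same radius.
-/

open MeasureTheory ProbabilityTheory Metric Set Function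

theorem Continuous.surjective_of_dense_orbits {X : Type*} [TopologicalSpace X] [CompactSpace X]
    [T2Space X] {f : X → X} (hf : Continuous f) (hmin : ∀ x, Dense (range fun N : ℕ => f^[N] x)) :
    Surjective f := by
  intro y
  have horbit : (range fun N : ℕ => f^[N] (f y)) ⊆ range f := by
    rintro _ ⟨N, rfl⟩
    exact ⟨f^[N] y, (iterate_succ_apply' f N y).symm.trans (iterate_succ_apply f N y)⟩
  have hdense : Dense (range f) := (hmin (f y)).mono horbit
  rw [← mem_range, ← (isCompact_range hf).isClosed.closure_eq, hdense.closure_eq]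
  exact mem_univ y

section Ultrametric

variable {X : Type*} [PseudoMetricSpace X] [IsUltrametricDist X]

def closedBalls (R : Set ℝ) : Set (Set X) :=
  {B | ∃ x, ∃ r ∈ R, B = closedBall x r}

theorem isPiSystem_closedBalls (R : Set ℝ) : IsPiSystem (closedBalls (X := X) R) := by
  rintro _ ⟨x, r, hr, rfl⟩ _ ⟨y, s, hs, rfl⟩ hne
  rcases IsUltrametricDist.closedBall_subset_trichotomy x y r s with h | h | h
  · exact ⟨x, r, hr, inter_eq_left.2 h⟩
  · exact ⟨y, s, hs, inter_eq_right.2 h⟩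
  · exact absurd h hne.not_disjoint

theorem isTopologicalBasis_closedBalls {R : Set ℝ} (hR₀ : ∀ r ∈ R, 0 < r)
    (hR : ∀ ε > 0, ∃ r ∈ R, r < ε) :
    TopologicalSpace.IsTopologicalBasis (closedBalls (X := X) R) := by
  refine TopologicalSpace.isTopologicalBasis_of_isOpen_of_nhds ?_ fun x U hx hU => ?_
  · rintro _ ⟨x, r, hr, rfl⟩
    exact IsUltrametricDist.isOpen_closedBall x (hR₀ r hr).ne'
  · obtain ⟨ε, hε, hεU⟩ := isOpen_iff.1 hU x hx
    obtain ⟨r, hr, hrε⟩ := hR ε hε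
    exact ⟨_, ⟨x, r, hr, rfl⟩, mem_closedBall_self (hR₀ r hr).le,
      (closedBall_subset_ball hrε).trans hεU⟩

variable [MeasurableSpace X]

theorem measure_closedBall_eq_of_isometry_of_dense_orbits [OpensMeasurableSpace X] {ψ : X → X}
    (hψ : Isometry ψ) (hmin : ∀ x, Dense (range fun N : ℕ => ψ^[N] x)) {μ : Measure X}
    (hμ : MeasurePreserving ψ μ μ) (x y : X) {r : ℝ} (hr : 0 < r) :
    μ (closedBall x r) = μ (closedBall y r) := by
  have hstep (z : X) : μ (closedBall (ψ z) r) = μ (closedBall z r) := by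
    rw [← hψ.preimage_closedBall z r,
      hμ.measure_preimage measurableSet_closedBall.nullMeasurableSet]
  have horbit (N : ℕ) : μ (closedBall (ψ^[N] x) r) = μ (closedBall x r) := by
    induction N with
    | zero => rfl
    | succ N ih => rw [iterate_succ_apply', hstep, ih]
  obtain ⟨_, hN, N, rfl⟩ := Metric.dense_iff.1 (hmin x) y r hr
  rw [← horbit N, IsUltrametricDist.closedBall_eq_of_mem (mem_closedBall.2 hN.le)]

theorem measure_univ_eq_card_mul [OpensMeasurableSpace X] {ι : Type*} [Fintype ι]
    (μ : Measure X) {c : ι → X} {r : ℝ} (hcover : ∀ x, ∃ i, dist x (c i) ≤ r)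
    (hsep : Pairwise fun i j => r < dist (c i) (c j))
    (hμ : ∀ x y, μ (closedBall x r) = μ (closedBall y r)) (x : X) :
    μ univ = Fintype.card ι * μ (closedBall x r) := by
  have hunion : ⋃ i, closedBall (c i) r = univ := iUnion_eq_univ_iff.2 hcover
  have hdisj : Pairwise (Disjoint on fun i => closedBall (c i) r) := fun i j hij =>
    disjoint_left.2 fun z hi hj => (hsep hij).not_ge <|
      (IsUltrametricDist.dist_triangle_max _ z _).trans (max_le (dist_comm z (c i) ▸ hi) hj)
  rw [← hunion, measure_iUnion hdisj fun _ => measurableSet_closedBall, tsum_fintype]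
  simp [hμ _ x]

variable [BorelSpace X] [SecondCountableTopology X] {R : Set ℝ}

theorem ext_of_closedBalls (hR₀ : ∀ r ∈ R, 0 < r) (hR : ∀ ε > 0, ∃ r ∈ R, r < ε)
    {μ ν : Measure X} [IsFiniteMeasure μ]
    (h : ∀ x, ∀ r ∈ R, μ (closedBall x r) = ν (closedBall x r)) (huniv : μ univ = ν univ) :
    μ = ν := by
  refine ext_of_generate_finite _ ?_ (isPiSystem_closedBalls R) ?_ huniv
  · rw [BorelSpace.measurable_eq (α := X),
      (isTopologicalBasis_closedBalls hR₀ hR).borel_eq_generateFrom]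
  · rintro _ ⟨x, r, hr, rfl⟩
    exact h x r hr

theorem measurePreserving_of_measure_closedBall_eq (hR₀ : ∀ r ∈ R, 0 < r)
    (hR : ∀ ε > 0, ∃ r ∈ R, r < ε) {μ : Measure X} [IsFiniteMeasure μ]
    (hμ : ∀ x y, ∀ r ∈ R, μ (closedBall x r) = μ (closedBall y r)) {ψ : X → X}
    (hψ : Isometry ψ) (hsurj : Surjective ψ) : MeasurePreserving ψ μ μ := by
  have hmeas : Measurable ψ := hψ.continuous.measurable
  refine ⟨hmeas, ext_of_closedBalls hR₀ hR (fun x r hr => ?_) ?_⟩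
  · obtain ⟨y, rfl⟩ := hsurj x
    rw [Measure.map_apply hmeas measurableSet_closedBall, hψ.preimage_closedBall, hμ _ _ r hr]
  · rw [Measure.map_apply hmeas MeasurableSet.univ, preimage_univ]

end Ultrametric

namespace PadicInt

variable {p : ℕ} [Fact p.Prime]

theorem norm_sub_le_iff_toZModPow_eq (x y : ℤ_[p]) (n : ℕ) :
    ‖x - y‖ ≤ (p : ℝ) ^ (-n : ℤ) ↔ toZModPow n x = toZModPow n y := by
  rw [norm_le_pow_iff_mem_span_pow, ← ker_toZModPow, RingHom.mem_ker, map_sub, sub_eq_zero]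

theorem norm_pow_mul_sub_le_iff {l : ℕ} (y z : ℤ_[p]) (n : ℕ) :
    ‖(p : ℤ_[p]) ^ l * y - p ^ l * z‖ ≤ (p : ℝ) ^ (-(l + n : ℤ)) ↔
      toZModPow n y = toZModPow n z := by
  have hp : (0 : ℝ) < p := by exact_mod_cast (Fact.out : p.Prime).pos
  rw [← mul_sub, norm_mul, norm_p_pow, neg_add, zpow_add₀ hp.ne',
    mul_le_mul_iff_right₀ (zpow_pos hp _), norm_sub_le_iff_toZModPow_eq]

theorem norm_natCast_val_unit {k : ℕ} (u : (ZMod (p ^ (k + 1)))ˣ) :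
    ‖((u : ZMod (p ^ (k + 1))).val : ℤ_[p])‖ = 1 :=
  norm_natCast_eq_one_iff.2 <|
    ((ZMod.val_coe_unit_coprime u).coprime_dvd_right (dvd_pow_self p k.succ_ne_zero)).symm

end PadicInt

abbrev PadicSphere (p : ℕ) [Fact p.Prime] (l : ℕ) : Type :=
  {x : ℤ_[p] // ‖x - 1‖ = (p : ℝ) ^ (-(l : ℤ))}

namespace PadicSphere

variable {p : ℕ} [Fact p.Prime] {l : ℕ}

/- Indexed by `k + 1`: modulo `p ^ 0 = 1` the unit `1` has `val = 0`, and `1 + p ^ l * 0` is not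
on the sphere. -/
noncomputable def center (l k : ℕ) (u : (ZMod (p ^ (k + 1)))ˣ) : PadicSphere p l :=
  ⟨1 + p ^ l * (u : ZMod (p ^ (k + 1))).val, by
    rw [add_sub_cancel_left, norm_mul, PadicInt.norm_natCast_val_unit, mul_one,
      PadicInt.norm_p_pow]⟩

theorem dist_center_le_iff {k : ℕ} (u v : (ZMod (p ^ (k + 1)))ˣ) :
    dist (center l k u) (center l k v) ≤ (p : ℝ) ^ (-(l + (k + 1) : ℤ)) ↔ u = v := by
  have h := PadicInt.norm_pow_mul_sub_le_iff (l := l) ((u : ZMod (p ^ (k + 1))).val : ℤ_[p])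
    ((v : ZMod (p ^ (k + 1))).val) (k + 1)
  push_cast at h
  rw [Subtype.dist_eq, dist_eq_norm, center, center, add_sub_add_left_eq_sub, h, map_natCast,
    map_natCast, ZMod.natCast_zmod_val, ZMod.natCast_zmod_val, Units.ext_iff]

theorem exists_dist_center_le (k : ℕ) (x : PadicSphere p l) :
    ∃ u, dist x (center l k u) ≤ (p : ℝ) ^ (-(l + (k + 1) : ℤ)) := by
  obtain ⟨y, hy⟩ : ∃ y, y * (p : ℤ_[p]) ^ l = x - 1 :=
    Ideal.mem_span_singleton'.1 <| (PadicInt.norm_le_pow_iff_mem_span_pow _ l).1 x.2.le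
  have hunit : IsUnit y := by
    have hx := x.2
    rw [← hy, norm_mul, PadicInt.norm_p_pow] at hx
    exact PadicInt.isUnit_iff.2 <|
      (mul_eq_right₀ (zpow_pos (by exact_mod_cast (Fact.out : p.Prime).pos) _).ne').1 hx
  set u := (hunit.map (PadicInt.toZModPow (k + 1))).unit
  refine ⟨u, ?_⟩
  have h := PadicInt.norm_pow_mul_sub_le_iff (l := l) y ((u : ZMod (p ^ (k + 1))).val) (k + 1)
  push_cast at h
  rw [Subtype.dist_eq, dist_eq_norm, center, ← sub_sub, ← hy, mul_comm y, h, map_natCast,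
    ZMod.natCast_zmod_val]
  rfl

instance : CompactSpace (PadicSphere p l) :=
  isCompact_iff_compactSpace.1 (isClosed_eq (by fun_prop) continuous_const).isCompact

def radii (p l : ℕ) : Set ℝ := range fun k : ℕ => (p : ℝ) ^ (-(l + (k + 1) : ℤ))

theorem radii_pos : ∀ r ∈ radii p l, 0 < r := by
  rintro _ ⟨k, rfl⟩
  exact zpow_pos (by exact_mod_cast (Fact.out : p.Prime).pos) _

theorem lt_of_mem_radii {r : ℝ} (hr : r ∈ radii p l) : r < (p : ℝ) ^ (-(l : ℤ)) := by
  obtain ⟨k, rfl⟩ := hr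
  exact zpow_lt_zpow_right₀ (by exact_mod_cast (Fact.out : p.Prime).one_lt) (by omega)

theorem exists_radii_lt : ∀ ε > 0, ∃ r ∈ radii p l, r < ε := by
  intro ε hε
  have hp : (1 : ℝ) < p := by exact_mod_cast (Fact.out : p.Prime).one_lt
  obtain ⟨k, hk⟩ := exists_pow_lt_of_lt_one hε (inv_lt_one_of_one_lt₀ hp)
  refine ⟨_, ⟨k, rfl⟩, lt_of_le_of_lt ?_ hk⟩
  rw [inv_pow, ← zpow_natCast, ← zpow_neg]
  exact zpow_le_zpow_right₀ hp.le (by omega)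

theorem isOpen_setOf_norm_sub_one_eq :
    IsOpen {x : ℤ_[p] | ‖x - 1‖ = (p : ℝ) ^ (-(l : ℤ))} := by
  have h : {x : ℤ_[p] | ‖x - 1‖ = (p : ℝ) ^ (-(l : ℤ))} = sphere 1 ((p : ℝ) ^ (-(l : ℤ))) := by
    ext; exact mem_sphere_iff_norm.symm
  rw [h]
  exact IsUltrametricDist.isOpen_sphere 1
    (zpow_pos (by exact_mod_cast (Fact.out : p.Prime).pos : (0 : ℝ) < p) (-(l : ℤ))).ne'

theorem closedBall_subset_setOf_norm_sub_one_eq (a : PadicSphere p l) {r : ℝ}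
    (hr : r < (p : ℝ) ^ (-(l : ℤ))) :
    closedBall (a : ℤ_[p]) r ⊆ {x | ‖x - 1‖ = (p : ℝ) ^ (-(l : ℤ))} := by
  intro x hx
  have hxa : ‖x - a‖ < ‖(a : ℤ_[p]) - 1‖ := by
    rw [a.2, ← dist_eq_norm]
    exact (mem_closedBall.1 hx).trans_lt hr
  show ‖x - 1‖ = _
  rw [← sub_add_sub_cancel x a 1, PadicInt.norm_add_eq_max_of_ne hxa.ne, max_eq_right hxa.le, a.2]

variable [MeasurableSpace ℤ_[p]] [BorelSpace ℤ_[p]]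

theorem measure_closedBall_eq_inv_card (μ : Measure (PadicSphere p l)) [IsProbabilityMeasure μ]
    {k : ℕ} (hμ : ∀ x y, μ (closedBall x ((p : ℝ) ^ (-(l + (k + 1) : ℤ)))) =
      μ (closedBall y ((p : ℝ) ^ (-(l + (k + 1) : ℤ))))) (a : PadicSphere p l) :
    μ (closedBall a ((p : ℝ) ^ (-(l + (k + 1) : ℤ)))) = (((p - 1) * p ^ k : ℕ) : ENNReal)⁻¹ := by
  have h := measure_univ_eq_card_mul μ (exists_dist_center_le k)
    (fun u v huv => lt_of_not_ge fun h => huv ((dist_center_le_iff u v).1 h)) hμ a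
  rw [measure_univ, ZMod.card_units_eq_totient, Nat.totient_prime_pow Fact.out k.succ_pos,
    Nat.succ_sub_one, mul_comm (p ^ k)] at h
  exact ENNReal.eq_inv_of_mul_eq_one_left (h.trans (mul_comm _ _)).symm

noncomputable def haar (p l : ℕ) [Fact p.Prime] [MeasurableSpace ℤ_[p]] [BorelSpace ℤ_[p]] :
    Measure (PadicSphere p l) :=
  ((Measure.addHaar : Measure ℤ_[p])[|{x | ‖x - 1‖ = (p : ℝ) ^ (-(l : ℤ))}]).comap Subtype.val

theorem haar_apply (s : Set (PadicSphere p l)) :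
    haar p l s = (Measure.addHaar : Measure ℤ_[p])[Subtype.val '' s |
      {x | ‖x - 1‖ = (p : ℝ) ^ (-(l : ℤ))}] :=
  (MeasurableEmbedding.subtype_coe isOpen_setOf_norm_sub_one_eq.measurableSet).comap_apply _ s

instance : IsProbabilityMeasure (haar p l) := by
  have hpos : (Measure.addHaar : Measure ℤ_[p]) {x | ‖x - 1‖ = (p : ℝ) ^ (-(l : ℤ))} ≠ 0 :=
    (isOpen_setOf_norm_sub_one_eq.measure_pos _ ⟨_, (center l 0 1).2⟩).ne'
  constructor
  rw [haar_apply, image_univ, Subtype.range_coe_subtype]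
  exact cond_apply_self hpos (measure_ne_top _ _)

theorem haar_closedBall_eq (x y : PadicSphere p l) {r : ℝ} (hr : r < (p : ℝ) ^ (-(l : ℤ))) :
    haar p l (closedBall x r) = haar p l (closedBall y r) := by
  have hball (a : PadicSphere p l) : haar p l (closedBall a r) =
      ((Measure.addHaar : Measure ℤ_[p]) {x | ‖x - 1‖ = (p : ℝ) ^ (-(l : ℤ))})⁻¹ *
        (Measure.addHaar : Measure ℤ_[p]) (closedBall 0 r) := by
    have hsub := closedBall_subset_setOf_norm_sub_one_eq a hr
    have himage : Subtype.val '' closedBall a r = closedBall (a : ℤ_[p]) r := by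
      rw [show closedBall a r = Subtype.val ⁻¹' closedBall (a : ℤ_[p]) r from rfl,
        image_preimage_eq_inter_range, Subtype.range_coe_subtype, inter_eq_left.2 hsub]
    rw [haar_apply, cond_apply isOpen_setOf_norm_sub_one_eq.measurableSet, himage,
      inter_eq_right.2 hsub, Measure.addHaar_closedBall_center]
  rw [hball, hball]

end PadicSphere

open PadicSphere in
theorem stmt_17_general (p : ℕ) [Fact p.Prime] (l : ℕ)
    [MeasurableSpace ℤ_[p]] [BorelSpace ℤ_[p]]
    (ψ : {x : ℤ_[p] // ‖x - 1‖ = (p : ℝ) ^ (-(l : ℤ))} →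
         {x : ℤ_[p] // ‖x - 1‖ = (p : ℝ) ^ (-(l : ℤ))})
    (hiso : Isometry ψ)
    (hmin : ∀ x : {x : ℤ_[p] // ‖x - 1‖ = (p : ℝ) ^ (-(l : ℤ))},
      Dense (Set.range fun N : ℕ => ψ^[N] x)) :
    (∃! μ : Measure {x : ℤ_[p] // ‖x - 1‖ = (p : ℝ) ^ (-(l : ℤ))},
        IsProbabilityMeasure μ ∧ MeasurePreserving ψ μ μ) ∧
    (∀ μ : Measure {x : ℤ_[p] // ‖x - 1‖ = (p : ℝ) ^ (-(l : ℤ))},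
        IsProbabilityMeasure μ → MeasurePreserving ψ μ μ →
        ∀ k : ℕ, 1 ≤ k → ∀ a : {x : ℤ_[p] // ‖x - 1‖ = (p : ℝ) ^ (-(l : ℤ))},
          μ {x | dist x a ≤ (p : ℝ) ^ (-(l + k : ℤ))}
            = (((p - 1) * p ^ (k - 1) : ℕ) : ENNReal)⁻¹) := by
  have hball (μ : Measure (PadicSphere p l)) [IsProbabilityMeasure μ]
      (hμ : MeasurePreserving ψ μ μ) (k : ℕ) (a : PadicSphere p l) :
      μ (closedBall a ((p : ℝ) ^ (-(l + (k + 1) : ℤ)))) = (((p - 1) * p ^ k : ℕ) : ENNReal)⁻¹ :=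
    measure_closedBall_eq_inv_card μ (fun x y => measure_closedBall_eq_of_isometry_of_dense_orbits
      hiso hmin hμ x y (radii_pos _ ⟨k, rfl⟩)) a
  have hhaar : MeasurePreserving ψ (haar p l) (haar p l) :=
    measurePreserving_of_measure_closedBall_eq (radii_pos (p := p) (l := l)) exists_radii_lt
      (fun x y _ hr => haar_closedBall_eq x y (lt_of_mem_radii hr)) hiso
      (hiso.continuous.surjective_of_dense_orbits hmin)
  refine ⟨⟨haar p l, ⟨inferInstance, hhaar⟩, fun ν ⟨hν, hνψ⟩ => ?_⟩, ?_⟩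
  · refine ext_of_closedBalls (radii_pos (p := p) (l := l)) exists_radii_lt ?_
      (by simp only [measure_univ])
    rintro x _ ⟨k, rfl⟩
    rw [hball ν hνψ, hball (haar p l) hhaar]
  · intro μ _ hμψ k hk a
    obtain ⟨k, rfl⟩ := Nat.exists_eq_add_of_le' hk
    simp only [Nat.add_sub_cancel, Nat.cast_add, Nat.cast_one]
    exact hball μ hμψ k a

theorem stmt_17 (p : ℕ) [Fact p.Prime] (hp : p ≠ 2) (l : ℕ) (hl : 1 ≤ l)
    [MeasurableSpace ℤ_[p]] [BorelSpace ℤ_[p]]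
    (ψ : {x : ℤ_[p] // ‖x - 1‖ = (p : ℝ) ^ (-(l : ℤ))} →
         {x : ℤ_[p] // ‖x - 1‖ = (p : ℝ) ^ (-(l : ℤ))})
    (hiso : Isometry ψ)
    (hball : ∀ (a : {x : ℤ_[p] // ‖x - 1‖ = (p : ℝ) ^ (-(l : ℤ))}) (m : ℕ),
      ψ '' {x | dist x a ≤ (p : ℝ) ^ (-(m : ℤ))}
        = {x | dist x (ψ a) ≤ (p : ℝ) ^ (-(m : ℤ))})
    (hmin : ∀ x : {x : ℤ_[p] // ‖x - 1‖ = (p : ℝ) ^ (-(l : ℤ))},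
      Dense (Set.range fun N : ℕ => ψ^[N] x)) :
    (∃! μ : Measure {x : ℤ_[p] // ‖x - 1‖ = (p : ℝ) ^ (-(l : ℤ))},
        IsProbabilityMeasure μ ∧ MeasurePreserving ψ μ μ) ∧
    (∀ μ : Measure {x : ℤ_[p] // ‖x - 1‖ = (p : ℝ) ^ (-(l : ℤ))},
        IsProbabilityMeasure μ → MeasurePreserving ψ μ μ →
        ∀ k : ℕ, 1 ≤ k → ∀ a : {x : ℤ_[p] // ‖x - 1‖ = (p : ℝ) ^ (-(l : ℤ))},
          μ {x | dist x a ≤ (p : ℝ) ^ (-(l + k : ℤ))}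
            = (((p - 1) * p ^ (k - 1) : ℕ) : ENNReal)⁻¹) :=
  stmt_17_general p l ψ hiso hmin
end

section
/- Let p be an odd prime, l ≥ 1, and n coprime to p. The Haar measure (normalized restriction of the Haar measure on Z_p to S_{p^{-l}}(1)) is invariant under the monomial map ψ_n(x) = x^n on S_{p^{-l}}(1). -/
open MeasureTheory Metric Set TopologicalSpace

/-! For `x ≡ y ≡ 1 (mod p)` and `p ∤ n` we have `x ^ n - y ^ n = (x - y) σ` with `σ ≡ n (mod p)` a
unit, so `ψ` is an isometry of the sphere. The sphere is compact, hence `ψ` is onto, and `ψ` maps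
the closed ball of radius `r` about `b` onto the one about `ψ b`; both carry the same Haar mass.
In an ultrametric space closed balls of radii tending to `0` form a π-system generating the Borel
σ-algebra, so `μ.map ψ = μ`. -/

theorem Isometry.surjective_of_compactSpace {X : Type*} [MetricSpace X] [CompactSpace X]
    {f : X → X} (hf : Isometry f) : Function.Surjective f := by
  intro a
  by_contra ha
  obtain ⟨ε, hε, hball⟩ := Metric.isOpen_iff.mp
    (isCompact_range hf.continuous).isClosed.isOpen_compl a (by simpa using ha)
  have hiter : ∀ i, Isometry f^[i] := fun i =>
    Nat.rec isometry_id (fun i h => by rw [Function.iterate_succ]; exact h.comp hf) i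
  -- The orbit of `a` is `ε`-separated, which sequential compactness forbids.
  have hsep : ∀ i j, i < j → ε ≤ dist (f^[j] a) (f^[i] a) := by
    intro i j hij
    obtain ⟨k, rfl⟩ := Nat.exists_eq_add_of_lt hij
    rw [add_assoc, Function.iterate_add_apply, (hiter i).dist_eq,
      Function.iterate_succ_apply']
    exact not_lt.mp fun h => hball (mem_ball.mpr h) (mem_range_self _)
  obtain ⟨_, φ, hφ, hlim⟩ := SeqCompactSpace.tendsto_subseq fun i => f^[i] a
  obtain ⟨N, hN⟩ := Metric.cauchySeq_iff'.mp hlim.cauchySeq ε hε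
  exact (hN (N + 1) N.le_succ).not_ge (hsep _ _ (hφ N.lt_succ_self))

section Ultrametric

variable {X ι : Type*} [PseudoMetricSpace X] [IsUltrametricDist X]

theorem IsUltrametricDist.isPiSystem_closedBalls (r : ι → ℝ) :
    IsPiSystem {s : Set X | ∃ x i, s = closedBall x (r i)} := by
  rintro _ ⟨x, i, rfl⟩ _ ⟨y, j, rfl⟩ ⟨z, hzx, hzy⟩
  rw [IsUltrametricDist.closedBall_eq_of_mem hzx, IsUltrametricDist.closedBall_eq_of_mem hzy]
  rcases le_total (r i) (r j) with h | h
  · exact ⟨z, i, inter_eq_left.mpr (closedBall_subset_closedBall h)⟩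
  · exact ⟨z, j, inter_eq_right.mpr (closedBall_subset_closedBall h)⟩

theorem IsUltrametricDist.isTopologicalBasis_closedBalls {r : ι → ℝ} (hr : ∀ i, 0 < r i)
    (hr0 : ∀ ε > 0, ∃ i, r i < ε) :
    IsTopologicalBasis {s : Set X | ∃ x i, s = closedBall x (r i)} := by
  refine isTopologicalBasis_of_isOpen_of_nhds ?_ fun x u hxu hu => ?_
  · rintro _ ⟨x, i, rfl⟩
    exact IsUltrametricDist.isOpen_closedBall x (hr i).ne'
  · obtain ⟨ε, hε, hball⟩ := Metric.isOpen_iff.mp hu x hxu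
    obtain ⟨i, hi⟩ := hr0 ε hε
    exact ⟨_, ⟨x, i, rfl⟩, mem_closedBall_self (hr i).le, (closedBall_subset_ball hi).trans hball⟩

theorem MeasureTheory.Measure.ext_of_closedBall_of_isUltrametricDist [SecondCountableTopology X]
    [MeasurableSpace X] [BorelSpace X] {μ ν : Measure X} [IsFiniteMeasure μ] {r : ι → ℝ}
    (hr : ∀ i, 0 < r i) (hr0 : ∀ ε > 0, ∃ i, r i < ε) (huniv : μ univ = ν univ)
    (hball : ∀ x i, μ (closedBall x (r i)) = ν (closedBall x (r i))) : μ = ν := by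
  refine ext_of_generate_finite _ ?_ (IsUltrametricDist.isPiSystem_closedBalls r) ?_ huniv
  · rw [BorelSpace.measurable_eq (α := X)]
    exact (IsUltrametricDist.isTopologicalBasis_closedBalls hr hr0).borel_eq_generateFrom
  · rintro _ ⟨x, i, rfl⟩
    exact hball x i

end Ultrametric

namespace PadicInt

variable {p : ℕ} [Fact p.Prime]

theorem toZMod_eq_one_of_norm_sub_one_lt {x : ℤ_[p]} (hx : ‖x - 1‖ < 1) : toZMod x = 1 := by
  rw [← sub_eq_zero, ← map_one toZMod, ← map_sub, ← RingHom.mem_ker, ker_toZMod,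
    IsLocalRing.mem_maximalIdeal, mem_nonunits]
  exact hx

theorem norm_pow_sub_pow_of_norm_sub_one_lt {n : ℕ} (hn : ¬ p ∣ n) {x y : ℤ_[p]}
    (hx : ‖x - 1‖ < 1) (hy : ‖y - 1‖ < 1) : ‖x ^ n - y ^ n‖ = ‖x - y‖ := by
  set σ := ∑ i ∈ Finset.range n, x ^ i * y ^ (n - 1 - i)
  have hσ : ‖σ‖ = 1 := by
    rw [← isUnit_iff]
    by_contra h
    have : toZMod σ = 0 := by
      rw [← RingHom.mem_ker, ker_toZMod, IsLocalRing.mem_maximalIdeal]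
      exact h
    simp [σ, toZMod_eq_one_of_norm_sub_one_lt hx, toZMod_eq_one_of_norm_sub_one_lt hy,
      ZMod.natCast_eq_zero_iff] at this
    exact hn this
  rw [← geom_sum₂_mul, norm_mul, hσ, one_mul]

theorem isometry_of_pow {P : ℤ_[p] → Prop} (hP : ∀ x, P x → ‖x - 1‖ < 1) {n : ℕ}
    (hn : ¬ p ∣ n) {f : Subtype P → Subtype P} (hf : ∀ x, (f x : ℤ_[p]) = x ^ n) :
    Isometry f :=
  Isometry.of_dist_eq fun x y => by
    simp only [Subtype.dist_eq, dist_eq_norm, hf]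
    exact norm_pow_sub_pow_of_norm_sub_one_lt hn (hP _ x.2) (hP _ y.2)

instance compactSpace_sphere (c : ℤ_[p]) (r : ℝ) : CompactSpace {x : ℤ_[p] // ‖x - c‖ = r} :=
  isCompact_iff_compactSpace.mp (isClosed_eq (by fun_prop) continuous_const).isCompact

end PadicInt

theorem stmt_18_general (p : ℕ) [Fact p.Prime] (l : ℕ) (hl : 1 ≤ l)
    (n : ℕ) (hn : n.Coprime p)
    [MeasurableSpace ℤ_[p]] [BorelSpace ℤ_[p]]
    (ψ : {x : ℤ_[p] // ‖x - 1‖ = (p : ℝ) ^ (-(l : ℤ))} →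
         {x : ℤ_[p] // ‖x - 1‖ = (p : ℝ) ^ (-(l : ℤ))})
    (hψ : ∀ x : {x : ℤ_[p] // ‖x - 1‖ = (p : ℝ) ^ (-(l : ℤ))},
      (ψ x : ℤ_[p]) = (x : ℤ_[p]) ^ n)
    (μ : Measure {x : ℤ_[p] // ‖x - 1‖ = (p : ℝ) ^ (-(l : ℤ))})
    (hprob : IsProbabilityMeasure μ)
    (hHaar : ∀ k : ℕ, 1 ≤ k → ∀ a : {x : ℤ_[p] // ‖x - 1‖ = (p : ℝ) ^ (-(l : ℤ))},
      μ {x | dist x a ≤ (p : ℝ) ^ (-(l + k : ℤ))}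
        = (((p - 1) * p ^ (k - 1) : ℕ) : ENNReal)⁻¹) :
    MeasurePreserving ψ μ μ := by
  have hp : (1 : ℝ) < p := by exact_mod_cast (Fact.out : p.Prime).one_lt
  have hiso : Isometry ψ := by
    refine PadicInt.isometry_of_pow (fun x hx => ?_)
      ((Fact.out : p.Prime).coprime_iff_not_dvd.mp hn.symm) hψ
    rw [hx]
    exact zpow_lt_one_of_neg₀ hp (by omega)
  have hmeas : Measurable ψ := hiso.continuous.measurable
  have : BorelSpace {x : ℤ_[p] // ‖x - 1‖ = (p : ℝ) ^ (-(l : ℤ))} := Subtype.borelSpace _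
  refine ⟨hmeas, Measure.ext_of_closedBall_of_isUltrametricDist
    (r := fun k : ℕ => (p : ℝ) ^ (-(l + (k + 1 : ℕ) : ℤ))) (fun k => zpow_pos (by linarith) _)
    (fun ε hε => ?_) (by simp [Measure.map_apply hmeas MeasurableSet.univ]) fun a k => ?_⟩
  · obtain ⟨m, hm⟩ := exists_pow_lt_of_lt_one hε (inv_lt_one_of_one_lt₀ hp)
    refine ⟨m, lt_of_le_of_lt ?_ hm⟩
    rw [inv_pow, ← zpow_natCast, ← zpow_neg]
    exact zpow_le_zpow_right₀ hp.le (by omega)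
  · obtain ⟨b, rfl⟩ := hiso.surjective_of_compactSpace a
    rw [Measure.map_apply hmeas measurableSet_closedBall, hiso.preimage_closedBall]
    exact (hHaar _ k.succ_pos b).trans (hHaar _ k.succ_pos (ψ b)).symm

theorem stmt_18 (p : ℕ) [Fact p.Prime] (hp : p ≠ 2) (l : ℕ) (hl : 1 ≤ l)
    (n : ℕ) (hn : n.Coprime p)
    [MeasurableSpace ℤ_[p]] [BorelSpace ℤ_[p]]
    (ψ : {x : ℤ_[p] // ‖x - 1‖ = (p : ℝ) ^ (-(l : ℤ))} →
         {x : ℤ_[p] // ‖x - 1‖ = (p : ℝ) ^ (-(l : ℤ))})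
    (hψ : ∀ x : {x : ℤ_[p] // ‖x - 1‖ = (p : ℝ) ^ (-(l : ℤ))},
      (ψ x : ℤ_[p]) = (x : ℤ_[p]) ^ n)
    (μ : Measure {x : ℤ_[p] // ‖x - 1‖ = (p : ℝ) ^ (-(l : ℤ))})
    (hprob : IsProbabilityMeasure μ)
    (hHaar : ∀ k : ℕ, 1 ≤ k → ∀ a : {x : ℤ_[p] // ‖x - 1‖ = (p : ℝ) ^ (-(l : ℤ))},
      μ {x | dist x a ≤ (p : ℝ) ^ (-(l + k : ℤ))}
        = (((p - 1) * p ^ (k - 1) : ℕ) : ENNReal)⁻¹) :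
    MeasurePreserving ψ μ μ :=
  stmt_18_general p l hl n hn ψ hψ μ hprob hHaar
end
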